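/- There exist a set X with |X| = 5 and two 2-networks N, N' on X such that N is not arboreal, N' is arboreal, N is not isomorphic to N', and R(N) = R(N') ≠ ∅. Consequently, 2-networks are not, in general, encoded by their induced triplet systems within the class of 2-networks on X. -/

import Mathlib

/-!
Common definitions for formalizing arboreal networks.

A (multi-rooted) network is modelled as a `PreNetwork`: a directed graph (arc
relation) on a vertex type `V` together with an embedding of the label set `X`
onto the leaves.  `IsNetwork` collects the m-network axioms.  Since the
underlying graph `U(N)` of an m-network is connected and the degree-1 vertices
of `U(N)` are exactly the leaves, the suppressed graph `U(N)⁻` is an unrooted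
phylogenetic tree on `X` if and only if `U(N)` is acyclic; we use this as the
definition of `IsArboreal`.
-/

namespace ArbNet

variable {X V W : Type}

/-- In-degree of a vertex of a digraph given by its arc relation. -/
noncomputable def inDeg (A : V → V → Prop) (v : V) : ℕ := {u | A u v}.ncard

/-- Out-degree of a vertex of a digraph given by its arc relation. -/
noncomputable def outDeg (A : V → V → Prop) (v : V) : ℕ := {u | A v u}.ncard

/-- A root: in-degree 0 and out-degree at least 2. -/
def IsRoot (A : V → V → Prop) (v : V) : Prop := inDeg A v = 0 ∧ 2 ≤ outDeg A v

/-- A leaf vertex: in-degree 1 and out-degree 0. -/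
def IsLeafVtx (A : V → V → Prop) (v : V) : Prop := inDeg A v = 1 ∧ outDeg A v = 0

/-- A hybrid vertex: out-degree 1 and in-degree at least 2. -/
def IsHybrid (A : V → V → Prop) (v : V) : Prop := outDeg A v = 1 ∧ 2 ≤ inDeg A v

/-- A tree vertex: in-degree 1 and out-degree at least 2. -/
def IsTreeVtx (A : V → V → Prop) (v : V) : Prop := inDeg A v = 1 ∧ 2 ≤ outDeg A v

/-- `Above A v u`: there is a directed path from `v` down to `u`
(`v` is above `u`, `u` is below `v`). -/
def Above (A : V → V → Prop) : V → V → Prop := Relation.ReflTransGen A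

/-- The underlying undirected (simple) graph `U(N)` of a digraph. -/
def underlying (A : V → V → Prop) : SimpleGraph V where
  Adj u v := u ≠ v ∧ (A u v ∨ A v u)
  symm := by
    constructor
    intro u v h
    exact ⟨h.1.symm, h.2.symm⟩
  loopless := by
    constructor
    intro v h
    exact h.1 rfl

/-- The data of a multi-rooted network on label set `X` with vertex type `V`:
an arc relation together with the labelling of the leaves by `X`. -/
structure PreNetwork (X : Type) (V : Type) where
  Arc : V → V → Prop
  leaf : X → V

/-- The m-network axioms: a finite DAG whose underlying graph is connected,
whose leaves are (labelled by) exactly `X`, every in-degree-0 vertex is a root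
of out-degree exactly 2, there is no vertex of in-degree 1 and out-degree 1,
and every interior vertex is a hybrid or a tree vertex. -/
def IsNetwork (N : PreNetwork X V) : Prop :=
  Finite V ∧
  (∀ v, ¬ Relation.TransGen N.Arc v v) ∧
  (underlying N.Arc).Connected ∧
  Function.Injective N.leaf ∧
  (∀ v, IsLeafVtx N.Arc v ↔ v ∈ Set.range N.leaf) ∧
  (∀ v, (inDeg N.Arc v = 0 ∧ outDeg N.Arc v = 2) ∨ IsLeafVtx N.Arc v ∨
      IsHybrid N.Arc v ∨ IsTreeVtx N.Arc v)

/-- `N` is arboreal iff the suppressed underlying graph `U(N)⁻` is an unrooted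
phylogenetic tree on `X`; for a connected `U(N)` whose degree-1 vertices are
exactly the leaves this holds iff `U(N)` is acyclic. -/
def IsArboreal (N : PreNetwork X V) : Prop := (underlying N.Arc).IsAcyclic

/-- Stack-free: no arc whose tail and head are both hybrids. -/
def StackFree (N : PreNetwork X V) : Prop :=
  ∀ u v, N.Arc u v → ¬(IsHybrid N.Arc u ∧ IsHybrid N.Arc v)

/-- Membership in the class `𝒜(X)` of stack-free arboreal networks on `X`. -/
def InA (N : PreNetwork X V) : Prop := IsNetwork N ∧ IsArboreal N ∧ StackFree N

/-- Banyan: the parents of every hybrid are roots, and every leaf is the child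
of a root or of a hybrid. -/
def Banyan (N : PreNetwork X V) : Prop :=
  (∀ h p, IsHybrid N.Arc h → N.Arc p h → IsRoot N.Arc p) ∧
  (∀ x : X, ∃ p, N.Arc p (N.leaf x) ∧ (IsRoot N.Arc p ∨ IsHybrid N.Arc p))

/-- The set `L(v)` of labels of leaves below a vertex `v`. -/
def leavesBelow (N : PreNetwork X V) (v : V) : Set X :=
  {x | Above N.Arc v (N.leaf x)}

/-- The triplet `xy|z` is induced by `N`: `x, y, z` are pairwise distinct and
there are a root `r` and a common ancestor `v ≤ r` of `x` and `y` with
`z ∈ L(r)` and `z ∉ L(v)` (equivalently, `z` is not below the least common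
ancestor of `x` and `y` in the tree below `r`). -/
def TripletRel (N : PreNetwork X V) (x y z : X) : Prop :=
  x ≠ y ∧ x ≠ z ∧ y ≠ z ∧
  ∃ r v, IsRoot N.Arc r ∧ Above N.Arc r v ∧
    Above N.Arc v (N.leaf x) ∧ Above N.Arc v (N.leaf y) ∧
    Above N.Arc r (N.leaf z) ∧ ¬ Above N.Arc v (N.leaf z)

/-- Degree of a vertex in the underlying undirected graph `U(N)`. -/
noncomputable def udeg (N : PreNetwork X V) (v : V) : ℕ :=
  ((underlying N.Arc).neighborSet v).ncard

/-- The duet `x ∥ y` is induced by `N`: `x ≠ y`, no triplet induced by `N`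
contains both `x` and `y` among its leaves, and the path in `U(N)` joining
`x` and `y` crosses precisely one degree-2 vertex of `U(N)`. -/
def DuetRel (N : PreNetwork X V) (x y : X) : Prop :=
  x ≠ y ∧
  (∀ z, ¬ TripletRel N x y z ∧ ¬ TripletRel N x z y ∧ ¬ TripletRel N y z x) ∧
  ∃ w : (underlying N.Arc).Walk (N.leaf x) (N.leaf y),
    w.IsPath ∧ (w.support.countP fun v => decide (udeg N v = 2)) = 1

/-- The triplet system `ℛ(N)`, a triplet `xy|z` being recorded as the pair
`({x,y}, z)` with `{x,y}` an unordered pair. -/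
def tripletSys (N : PreNetwork X V) : Set (Sym2 X × X) :=
  {t | ∃ x y z, TripletRel N x y z ∧ t = (s(x, y), z)}

/-- The duet system `𝒟(N)`. -/
def duetSys (N : PreNetwork X V) : Set (Sym2 X) :=
  {d | ∃ x y, DuetRel N x y ∧ d = s(x, y)}

/-- The union `𝒟(N) ∪ ℛ(N)`, with duets and triplets kept as different kinds
of objects (left resp. right summand). -/
def dtSys (N : PreNetwork X V) : Set (Sym2 X ⊕ (Sym2 X × X)) :=
  (Sum.inl '' duetSys N) ∪ (Sum.inr '' tripletSys N)

/-- Isomorphism of networks on `X`: a bijection of the vertex sets preserving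
arcs that is the identity on `X`. -/
def Isomorphic (N : PreNetwork X V) (N' : PreNetwork X W) : Prop :=
  ∃ e : V ≃ W, (∀ u v, N.Arc u v ↔ N'.Arc (e u) (e v)) ∧
    ∀ x, e (N.leaf x) = N'.leaf x


/-! ### Auxiliary general lemmas -/

lemma inDeg_eq_card [Fintype V] (A : V → V → Prop) [DecidableRel A] (v : V) :
    inDeg A v = (Finset.univ.filter (fun u => A u v)).card := by
  rw [inDeg, Set.ncard_eq_toFinset_card']; congr 1; ext u; simp

lemma outDeg_eq_card [Fintype V] (A : V → V → Prop) [DecidableRel A] (v : V) :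
    outDeg A v = (Finset.univ.filter (fun u => A v u)).card := by
  rw [outDeg, Set.ncard_eq_toFinset_card']; congr 1; ext u; simp

lemma ncard_setOf_eq [Fintype V] (P : V → Prop) [DecidablePred P] :
    {v | P v}.ncard = (Finset.univ.filter P).card := by
  rw [Set.ncard_eq_toFinset_card']; congr 1; ext u; simp

lemma no_transGen {A : V → V → Prop} (f : V → ℕ)
    (hmono : ∀ u v, A u v → f u < f v) : ∀ v, ¬ Relation.TransGen A v v := by
  intro v h
  have key : ∀ a b, Relation.TransGen A a b → f a < f b := by
    intro a b hab
    induction hab with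
    | single h => exact hmono _ _ h
    | tail _ h2 ih => exact ih.trans (hmono _ _ h2)
  exact absurd (key v v h) (lt_irrefl _)

lemma above_to_reach {A : V → V → Prop} {R : V → V → Bool}
    (hrefl : ∀ v, R v v = true)
    (hstep : ∀ a b c, R a b = true → A b c → R a c = true) :
    ∀ u v, Above A u v → R u v = true := by
  intro u v h
  induction h with
  | refl => exact hrefl u
  | tail _ h2 ih => exact hstep _ _ _ ih h2

lemma reach_to_above {A : V → V → Prop} {R : V → V → Bool}
    (f : V → ℕ) (K : ℕ) (hf : ∀ v, f v ≤ K)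
    (h : ∀ u v, R u v = true → u = v ∨ ∃ w, A u w ∧ R w v = true ∧ f u < f w) :
    ∀ u v, R u v = true → Above A u v := by
  have main : ∀ m u v, K - f u ≤ m → R u v = true → Above A u v := by
    intro m
    induction m with
    | zero =>
      intro u v hm hR
      rcases h u v hR with rfl | ⟨w, _, hRw, hlt⟩
      · exact Relation.ReflTransGen.refl
      · have := hf w; omega
    | succ m ih =>
      intro u v hm hR
      rcases h u v hR with rfl | ⟨w, hA, hRw, hlt⟩
      · exact Relation.ReflTransGen.refl
      · have := hf w
        exact Relation.ReflTransGen.head hA (ih w v (by omega) hRw)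
  exact fun u v => main (K - f u) u v le_rfl

lemma walk_inv {H : SimpleGraph V} {S : V → Bool}
    (hcl : ∀ a b, H.Adj a b → S a = true → S b = true) :
    ∀ {u v : V}, H.Walk u v → S u = true → S v = true := by
  intro u v p
  induction p with
  | nil => exact id
  | cons h _ ih => intro hu; exact ih (hcl _ _ h hu)

lemma isBridge_of_inv {G : SimpleGraph V} {v w : V} (S : V → Bool)
    (hadj : G.Adj v w) (hv : S v = true) (hw : S w = false)
    (hcl : ∀ a b, G.Adj a b → ¬((a = v ∧ b = w) ∨ (a = w ∧ b = v)) → S a = true → S b = true) :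
    G.IsBridge s(v, w) := by
  rw [SimpleGraph.isBridge_iff]
  refine fun hr => ?_
  obtain ⟨p⟩ := hr
  have hcl' : ∀ a b, (G \ SimpleGraph.fromEdgeSet {s(v, w)}).Adj a b → S a = true → S b = true := by
    intro a b hab
    rw [SimpleGraph.sdiff_adj, SimpleGraph.fromEdgeSet_adj] at hab
    refine hcl a b hab.1 ?_
    intro hc
    exact hab.2 ⟨by rw [Set.mem_singleton_iff, Sym2.eq_iff]; tauto, hab.1.ne⟩
  have := walk_inv hcl' p hv
  rw [hw] at this
  exact Bool.false_ne_true this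

/-! ### The two concrete networks -/

/-- Arcs of the non-arboreal 2-network `N` on 11 vertices: `0, 1` are roots,
`2, 4, 5` are tree vertices, `3` is a hybrid (whose parents `0, 2, 1` create an
undirected cycle `0-2-3-0`), and `6, …, 10` are the leaves. -/
def arcN (u v : Fin 11) : Bool :=
  decide ((u.val, v.val) ∈ [(0,2),(0,3),(2,6),(2,3),(3,7),(1,3),(1,4),(4,8),(4,5),(5,9),(5,10)])

def ArcN : Fin 11 → Fin 11 → Prop := fun u v => arcN u v = true

instance : DecidableRel ArcN := fun u v => instDecidableEqBool _ _

instance : DecidableRel (underlying ArcN).Adj :=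
  fun u v => inferInstanceAs (Decidable (u ≠ v ∧ (ArcN u v ∨ ArcN v u)))

def leafN : Fin 5 → Fin 11 := fun x => ⟨x.val + 6, by omega⟩

def NN : PreNetwork (Fin 5) (Fin 11) := ⟨ArcN, leafN⟩

def descN (v : Fin 11) : List ℕ :=
  match v.val with
  | 0 => [0,2,3,6,7] | 1 => [1,3,4,5,7,8,9,10] | 2 => [2,3,6,7] | 3 => [3,7]
  | 4 => [4,5,8,9,10] | 5 => [5,9,10] | n => [n]

def reachN (u v : Fin 11) : Bool := decide (v.val ∈ descN u)

def rkN : Fin 11 → ℕ := fun v => [0,0,1,2,1,2,3,3,3,3,3].getD v.val 0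

/-- Arcs of the arboreal 2-network `N'` on 10 vertices: `0, 1` are roots,
`2` is a hybrid, `3, 4` are tree vertices, `5, …, 9` are the leaves; the
underlying graph is a tree. -/
def arcM (u v : Fin 10) : Bool :=
  decide ((u.val, v.val) ∈ [(0,5),(0,2),(1,2),(1,3),(2,6),(3,7),(3,4),(4,8),(4,9)])

def ArcM : Fin 10 → Fin 10 → Prop := fun u v => arcM u v = true

instance : DecidableRel ArcM := fun u v => instDecidableEqBool _ _

instance : DecidableRel (underlying ArcM).Adj :=
  fun u v => inferInstanceAs (Decidable (u ≠ v ∧ (ArcM u v ∨ ArcM v u)))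

def leafM : Fin 5 → Fin 10 := fun x => ⟨x.val + 5, by omega⟩

def MM : PreNetwork (Fin 5) (Fin 10) := ⟨ArcM, leafM⟩

def descM (v : Fin 10) : List ℕ :=
  match v.val with
  | 0 => [0,5,2,6] | 1 => [1,2,3,4,6,7,8,9] | 2 => [2,6] | 3 => [3,4,7,8,9]
  | 4 => [4,8,9] | n => [n]

def reachM (u v : Fin 10) : Bool := decide (v.val ∈ descM u)

def rkM : Fin 10 → ℕ := fun v => [0,0,1,1,2,1,2,2,3,3].getD v.val 0

/-! ### Reachability and triplet characterizations -/

lemma aboveN_iff : ∀ u v, Above ArcN u v ↔ reachN u v = true := fun u v =>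
  ⟨above_to_reach (by decide) (by decide) u v,
   reach_to_above rkN 3 (by decide) (by decide) u v⟩

lemma aboveM_iff : ∀ u v, Above ArcM u v ↔ reachM u v = true := fun u v =>
  ⟨above_to_reach (by decide) (by decide) u v,
   reach_to_above rkM 3 (by decide) (by decide) u v⟩

lemma rootN_iff : ∀ v, IsRoot ArcN v ↔ (v = 0 ∨ v = 1) := by
  intro v; rw [IsRoot, inDeg_eq_card, outDeg_eq_card]; revert v; decide

lemma rootM_iff : ∀ v, IsRoot ArcM v ↔ (v = 0 ∨ v = 1) := by
  intro v; rw [IsRoot, inDeg_eq_card, outDeg_eq_card]; revert v; decide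

def TBN (x y z : Fin 5) : Prop :=
  x ≠ y ∧ x ≠ z ∧ y ≠ z ∧ ∃ r v : Fin 11, (r = 0 ∨ r = 1) ∧ reachN r v = true ∧
    reachN v (leafN x) = true ∧ reachN v (leafN y) = true ∧
    reachN r (leafN z) = true ∧ ¬ reachN v (leafN z) = true

def TBM (x y z : Fin 5) : Prop :=
  x ≠ y ∧ x ≠ z ∧ y ≠ z ∧ ∃ r v : Fin 10, (r = 0 ∨ r = 1) ∧ reachM r v = true ∧
    reachM v (leafM x) = true ∧ reachM v (leafM y) = true ∧
    reachM r (leafM z) = true ∧ ¬ reachM v (leafM z) = true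

instance : DecidablePred fun p : Fin 5 × Fin 5 × Fin 5 => TBN p.1 p.2.1 p.2.2 := fun _ => by
  unfold TBN; infer_instance

instance : DecidablePred fun p : Fin 5 × Fin 5 × Fin 5 => TBM p.1 p.2.1 p.2.2 := fun _ => by
  unfold TBM; infer_instance

lemma tripN_iff (x y z : Fin 5) : TripletRel NN x y z ↔ TBN x y z := by
  show (x ≠ y ∧ x ≠ z ∧ y ≠ z ∧ ∃ r v : Fin 11, IsRoot ArcN r ∧ Above ArcN r v ∧
      Above ArcN v (leafN x) ∧ Above ArcN v (leafN y) ∧ Above ArcN r (leafN z) ∧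
      ¬ Above ArcN v (leafN z)) ↔ _
  unfold TBN
  simp only [aboveN_iff, rootN_iff]

lemma tripM_iff (x y z : Fin 5) : TripletRel MM x y z ↔ TBM x y z := by
  show (x ≠ y ∧ x ≠ z ∧ y ≠ z ∧ ∃ r v : Fin 10, IsRoot ArcM r ∧ Above ArcM r v ∧
      Above ArcM v (leafM x) ∧ Above ArcM v (leafM y) ∧ Above ArcM r (leafM z) ∧
      ¬ Above ArcM v (leafM z)) ↔ _
  unfold TBM
  simp only [aboveM_iff, rootM_iff]

set_option maxRecDepth 10000 in
lemma TB_iff : ∀ x y z : Fin 5, TBN x y z ↔ TBM x y z := by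
  have : ∀ p : Fin 5 × Fin 5 × Fin 5, TBN p.1 p.2.1 p.2.2 ↔ TBM p.1 p.2.1 p.2.2 := by decide
  exact fun x y z => this (x, y, z)

set_option maxRecDepth 10000 in
lemma TBN_341 : TBN 3 4 1 := by
  refine ⟨by decide, by decide, by decide, 1, 5, Or.inr rfl, by decide, by decide, by decide, by decide, by decide⟩

/-- There are a 5-element set `X` and two 2-networks
`N, N'` on `X` with `N` not arboreal, `N'` arboreal, `N ≄ N'` and
`ℛ(N) = ℛ(N') ≠ ∅`: 2-networks are not encoded by their triplet systems. -/
theorem two_networks_not_encoded_by_triplets :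
    ∃ (X : Type), Nat.card X = 5 ∧
      ∃ (V W : Type) (N : PreNetwork X V) (N' : PreNetwork X W),
        IsNetwork N ∧ IsNetwork N' ∧
        {v | IsRoot N.Arc v}.ncard = 2 ∧ {v | IsRoot N'.Arc v}.ncard = 2 ∧
        ¬ IsArboreal N ∧ IsArboreal N' ∧ ¬ Isomorphic N N' ∧
        tripletSys N = tripletSys N' ∧ tripletSys N ≠ ∅ := by
  refine ⟨Fin 5, by simp, Fin 11, Fin 10, NN, MM, ?_, ?_, ?_, ?_, ?_, ?_, ?_, ?_, ?_⟩
  · -- `N` is a network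
    refine ⟨Finite.of_fintype _, no_transGen (A := ArcN) rkN (by decide), ?_, by decide, ?_, ?_⟩
    · -- connectivity
      show (underlying ArcN).Connected
      have adj : ∀ u v : Fin 11, arcN u v = true → (underlying ArcN).Adj u v := by
        intro u v h
        exact ⟨by revert h; revert u v; decide, Or.inl h⟩
      have r2 : (underlying ArcN).Reachable 0 2 := (adj 0 2 (by decide)).reachable
      have r3 : (underlying ArcN).Reachable 0 3 := (adj 0 3 (by decide)).reachable
      have r6 := r2.trans (adj 2 6 (by decide)).reachable
      have r7 := r3.trans (adj 3 7 (by decide)).reachable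
      have r1 := r3.trans (adj 1 3 (by decide)).reachable.symm
      have r4 := r1.trans (adj 1 4 (by decide)).reachable
      have r5 := r4.trans (adj 4 5 (by decide)).reachable
      have r8 := r4.trans (adj 4 8 (by decide)).reachable
      have r9 := r5.trans (adj 5 9 (by decide)).reachable
      have r10 := r5.trans (adj 5 10 (by decide)).reachable
      have r0 : (underlying ArcN).Reachable 0 0 := SimpleGraph.Reachable.refl 0
      have hall : ∀ v, (underlying ArcN).Reachable 0 v := by
        intro v; fin_cases v <;> assumption
      rw [SimpleGraph.connected_iff]
      exact ⟨fun u v => (hall u).symm.trans (hall v), ⟨0⟩⟩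
    · -- leaves
      intro v
      show IsLeafVtx ArcN v ↔ v ∈ Set.range leafN
      simp only [IsLeafVtx, inDeg_eq_card, outDeg_eq_card, Set.mem_range]
      revert v; decide
    · -- vertex types
      intro v
      show (inDeg ArcN v = 0 ∧ outDeg ArcN v = 2) ∨ IsLeafVtx ArcN v ∨
        IsHybrid ArcN v ∨ IsTreeVtx ArcN v
      simp only [IsLeafVtx, IsHybrid, IsTreeVtx, inDeg_eq_card, outDeg_eq_card]
      revert v; decide
  · -- `N'` is a network
    refine ⟨Finite.of_fintype _, no_transGen (A := ArcM) rkM (by decide), ?_, by decide, ?_, ?_⟩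
    · show (underlying ArcM).Connected
      have adj : ∀ u v : Fin 10, arcM u v = true → (underlying ArcM).Adj u v := by
        intro u v h
        exact ⟨by revert h; revert u v; decide, Or.inl h⟩
      have r5 : (underlying ArcM).Reachable 0 5 := (adj 0 5 (by decide)).reachable
      have r2 : (underlying ArcM).Reachable 0 2 := (adj 0 2 (by decide)).reachable
      have r6 := r2.trans (adj 2 6 (by decide)).reachable
      have r1 := r2.trans (adj 1 2 (by decide)).reachable.symm
      have r3 := r1.trans (adj 1 3 (by decide)).reachable
      have r7 := r3.trans (adj 3 7 (by decide)).reachable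
      have r4 := r3.trans (adj 3 4 (by decide)).reachable
      have r8 := r4.trans (adj 4 8 (by decide)).reachable
      have r9 := r4.trans (adj 4 9 (by decide)).reachable
      have r0 : (underlying ArcM).Reachable 0 0 := SimpleGraph.Reachable.refl 0
      have hall : ∀ v, (underlying ArcM).Reachable 0 v := by
        intro v; fin_cases v <;> assumption
      rw [SimpleGraph.connected_iff]
      exact ⟨fun u v => (hall u).symm.trans (hall v), ⟨0⟩⟩
    · intro v
      show IsLeafVtx ArcM v ↔ v ∈ Set.range leafM
      simp only [IsLeafVtx, inDeg_eq_card, outDeg_eq_card, Set.mem_range]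
      revert v; decide
    · intro v
      show (inDeg ArcM v = 0 ∧ outDeg ArcM v = 2) ∨ IsLeafVtx ArcM v ∨
        IsHybrid ArcM v ∨ IsTreeVtx ArcM v
      simp only [IsLeafVtx, IsHybrid, IsTreeVtx, inDeg_eq_card, outDeg_eq_card]
      revert v; decide
  · -- roots of `N`
    show {v | IsRoot ArcN v}.ncard = 2
    have h : {v | IsRoot ArcN v} = {v : Fin 11 | v = 0 ∨ v = 1} := Set.ext fun v => rootN_iff v
    rw [h, ncard_setOf_eq]
    decide
  · -- roots of `N'`
    show {v | IsRoot ArcM v}.ncard = 2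
    have h : {v | IsRoot ArcM v} = {v : Fin 10 | v = 0 ∨ v = 1} := Set.ext fun v => rootM_iff v
    rw [h, ncard_setOf_eq]
    decide
  · -- `N` is not arboreal
    intro h
    have h1 : (underlying ArcN).Adj 0 2 := ⟨by decide, Or.inl (by decide)⟩
    have h2 : (underlying ArcN).Adj 2 3 := ⟨by decide, Or.inl (by decide)⟩
    have h3 : (underlying ArcN).Adj 3 0 := ⟨by decide, Or.inr (by decide)⟩
    refine h (SimpleGraph.Walk.cons h1 (SimpleGraph.Walk.cons h2
        (SimpleGraph.Walk.cons h3 SimpleGraph.Walk.nil))) ?_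
    rw [SimpleGraph.Walk.isCycle_def]
    refine ⟨⟨?_⟩, nofun, ?_⟩
    · decide +revert
    · decide +revert
  · -- `N'` is arboreal
    show (underlying ArcM).IsAcyclic
    rw [SimpleGraph.isAcyclic_iff_forall_adj_isBridge]
    have b1 : (underlying ArcM).IsBridge s(0,5) :=
      isBridge_of_inv (fun v => decide (v.val ≠ 5)) ⟨by decide, Or.inl (by decide)⟩
        (by decide) (by decide) (by decide)
    have b2 : (underlying ArcM).IsBridge s(0,2) :=
      isBridge_of_inv (fun v => decide (v.val ∈ [0,5])) ⟨by decide, Or.inl (by decide)⟩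
        (by decide) (by decide) (by decide)
    have b3 : (underlying ArcM).IsBridge s(1,2) :=
      isBridge_of_inv (fun v => decide (v.val ∈ [1,3,4,7,8,9])) ⟨by decide, Or.inl (by decide)⟩
        (by decide) (by decide) (by decide)
    have b4 : (underlying ArcM).IsBridge s(1,3) :=
      isBridge_of_inv (fun v => decide (v.val ∈ [0,1,2,5,6])) ⟨by decide, Or.inl (by decide)⟩
        (by decide) (by decide) (by decide)
    have b5 : (underlying ArcM).IsBridge s(2,6) :=
      isBridge_of_inv (fun v => decide (v.val ≠ 6)) ⟨by decide, Or.inl (by decide)⟩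
        (by decide) (by decide) (by decide)
    have b6 : (underlying ArcM).IsBridge s(3,7) :=
      isBridge_of_inv (fun v => decide (v.val ≠ 7)) ⟨by decide, Or.inl (by decide)⟩
        (by decide) (by decide) (by decide)
    have b7 : (underlying ArcM).IsBridge s(3,4) :=
      isBridge_of_inv (fun v => decide (v.val ∈ [0,1,2,3,5,6,7])) ⟨by decide, Or.inl (by decide)⟩
        (by decide) (by decide) (by decide)
    have b8 : (underlying ArcM).IsBridge s(4,8) :=
      isBridge_of_inv (fun v => decide (v.val ≠ 8)) ⟨by decide, Or.inl (by decide)⟩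
        (by decide) (by decide) (by decide)
    have b9 : (underlying ArcM).IsBridge s(4,9) :=
      isBridge_of_inv (fun v => decide (v.val ≠ 9)) ⟨by decide, Or.inl (by decide)⟩
        (by decide) (by decide) (by decide)
    have hdir : ∀ v w : Fin 10, (underlying ArcM).Adj v w →
        ((v, w) ∈ [((0:Fin 10),(5:Fin 10)),(0,2),(1,2),(1,3),(2,6),(3,7),(3,4),(4,8),(4,9)] ∨
         (w, v) ∈ [((0:Fin 10),(5:Fin 10)),(0,2),(1,2),(1,3),(2,6),(3,7),(3,4),(4,8),(4,9)]) := by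
      decide
    intro v w hadj
    rcases hdir v w hadj with hm | hm
    · fin_cases hm <;> first | exact b1 | exact b2 | exact b3 | exact b4 | exact b5 | exact b6 | exact b7 | exact b8 | exact b9
    · rw [Sym2.eq_swap]
      fin_cases hm <;> first | exact b1 | exact b2 | exact b3 | exact b4 | exact b5 | exact b6 | exact b7 | exact b8 | exact b9
  · -- not isomorphic: different numbers of vertices
    rintro ⟨e, -, -⟩
    have := Fintype.card_congr e
    simp at this
  · -- equal triplet systems
    ext t
    simp only [tripletSys, Set.mem_setOf_eq]
    constructor
    · rintro ⟨x, y, z, h, rfl⟩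
      exact ⟨x, y, z, (tripM_iff x y z).mpr ((TB_iff x y z).mp ((tripN_iff x y z).mp h)), rfl⟩
    · rintro ⟨x, y, z, h, rfl⟩
      exact ⟨x, y, z, (tripN_iff x y z).mpr ((TB_iff x y z).mpr ((tripM_iff x y z).mp h)), rfl⟩
  · -- nonempty triplet system
    apply Set.nonempty_iff_ne_empty.mp
    exact ⟨(s((3:Fin 5), 4), (1:Fin 5)), 3, 4, 1, (tripN_iff 3 4 1).mpr TBN_341, rfl⟩


end ArbNet
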